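/- arXiv:2206.07950 — 7 statements merged into one kernel-verified Lean document; each statement's English description precedes it below -/
import Mathlib

section
/- For every x ∈ ℝ: −√(2u₂) ≤ ψ'(x)/ψ(x) ≤ −√(2u₁). (This is Lemma 2.3(2) in the case λ > ρ: writing K₂ = √(2(γ(λ)−(m−1)es)) and K₁ = √(2(γ(λ)−(m−1)ei)), one has −K₁ ≤ ψ_x/ψ ≤ −K₂ on ℝ.) -/
/-!
Since `ψ'' = 2aψ ≥ 0`, `ψ'` is monotone, and as `ψ` has a finite limit at `+∞` this forces
`ψ' → 0` there, hence `ψ' ≤ 0`. For a constant `c`, the energy `ψ'² - 2cψ²` has derivative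
`4ψψ'(a - c)`, so it is antitone for `c = u₁` and monotone for `c = u₂`; since it tends to `0`
at `+∞`, this gives `2u₁ψ² ≤ ψ'² ≤ 2u₂ψ²`, i.e. the bounds on `ψ'/ψ`.
-/

open Filter Topology

theorem tendsto_deriv_atTop_of_monotone_deriv {f : ℝ → ℝ} {l : ℝ} (hf : Differentiable ℝ f)
    (hmono : Monotone (deriv f)) (hlim : Tendsto f atTop (𝓝 l)) :
    Tendsto (deriv f) atTop (𝓝 0) := by
  have slope (x : ℝ) : ∃ c ∈ Set.Ioo x (x + 1), deriv f c = f (x + 1) - f x := by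
    obtain ⟨c, hc, hslope⟩ := exists_deriv_eq_slope f (lt_add_one x)
      hf.continuous.continuousOn (fun y _ => (hf y).differentiableWithinAt)
    exact ⟨c, hc, by rw [hslope, add_sub_cancel_left, div_one]⟩
  have hlower (x : ℝ) : f x - f (x - 1) ≤ deriv f x := by
    obtain ⟨c, hc, hcf⟩ := slope (x - 1)
    rw [sub_add_cancel] at hc hcf
    exact hcf ▸ hmono hc.2.le
  have hupper (x : ℝ) : deriv f x ≤ f (x + 1) - f x := by
    obtain ⟨c, hc, hcf⟩ := slope x
    exact hcf ▸ hmono hc.1.le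
  have hshift (t : ℝ) : Tendsto (fun x => f (x + t)) atTop (𝓝 l) :=
    hlim.comp (tendsto_atTop_add_const_right _ t tendsto_id)
  have hdiff (s t : ℝ) : Tendsto (fun x => f (x + s) - f (x + t)) atTop (𝓝 0) := by
    simpa using (hshift s).sub (hshift t)
  refine tendsto_of_tendsto_of_tendsto_of_le_of_le ?_ ?_ hlower hupper
  · simpa [sub_eq_add_neg] using hdiff 0 (-1)
  · simpa using hdiff 1 0

noncomputable def energy (ψ : ℝ → ℝ) (c x : ℝ) : ℝ :=
  deriv ψ x ^ 2 - 2 * c * ψ x ^ 2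

section Energy

variable {a ψ : ℝ → ℝ} (hψ : Differentiable ℝ ψ) (hψ' : Differentiable ℝ (deriv ψ))
  (hode : ∀ x, deriv (deriv ψ) x = 2 * a x * ψ x)
include hψ hψ' hode

theorem hasDerivAt_energy (c x : ℝ) :
    HasDerivAt (energy ψ c) (4 * ψ x * deriv ψ x * (a x - c)) x := by
  have h := ((hψ' x).hasDerivAt.pow 2).sub (((hψ x).hasDerivAt.pow 2).const_mul (2 * c))
  refine h.congr_deriv ?_
  rw [hode x]
  ring

theorem antitone_energy_of_le {c : ℝ} (hc : ∀ x, c ≤ a x) (hpos : ∀ x, 0 ≤ ψ x)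
    (hneg : ∀ x, deriv ψ x ≤ 0) : Antitone (energy ψ c) := by
  refine antitone_of_deriv_nonpos (fun x => (hasDerivAt_energy hψ hψ' hode c x).differentiableAt)
    fun x => ?_
  rw [(hasDerivAt_energy hψ hψ' hode c x).deriv]
  exact mul_nonpos_of_nonpos_of_nonneg
    (mul_nonpos_of_nonneg_of_nonpos (by linarith [hpos x]) (hneg x)) (sub_nonneg.2 (hc x))

theorem monotone_energy_of_ge {c : ℝ} (hc : ∀ x, a x ≤ c) (hpos : ∀ x, 0 ≤ ψ x)
    (hneg : ∀ x, deriv ψ x ≤ 0) : Monotone (energy ψ c) := by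
  refine monotone_of_deriv_nonneg (fun x => (hasDerivAt_energy hψ hψ' hode c x).differentiableAt)
    fun x => ?_
  rw [(hasDerivAt_energy hψ hψ' hode c x).deriv]
  exact mul_nonneg_of_nonpos_of_nonpos
    (mul_nonpos_of_nonneg_of_nonpos (by linarith [hpos x]) (hneg x)) (sub_nonpos.2 (hc x))

end Energy

theorem tendsto_energy_atTop {ψ : ℝ → ℝ} (c : ℝ) (hψ : Tendsto ψ atTop (𝓝 0))
    (hψ' : Tendsto (deriv ψ) atTop (𝓝 0)) : Tendsto (energy ψ c) atTop (𝓝 0) := by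
  have h := (hψ'.pow 2).sub ((hψ.pow 2).const_mul (2 * c))
  rwa [zero_pow two_ne_zero, mul_zero, sub_zero] at h

theorem neg_sqrt_le_div_and_div_le_neg_sqrt {p q s t : ℝ} (hp : 0 < p) (hq : q ≤ 0)
    (hs : s * p ^ 2 ≤ q ^ 2) (ht : q ^ 2 ≤ t * p ^ 2) :
    -Real.sqrt t ≤ q / p ∧ q / p ≤ -Real.sqrt s := by
  have hp2 : 0 < p ^ 2 := by positivity
  have hs' : s ≤ (q / p) ^ 2 := by rwa [div_pow, le_div_iff₀ hp2]
  have ht' : (q / p) ^ 2 ≤ t := by rwa [div_pow, div_le_iff₀ hp2]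
  have habs : |q / p| = -(q / p) := abs_of_nonpos (div_nonpos_of_nonpos_of_nonneg hq hp.le)
  constructor
  · linarith [Real.abs_le_sqrt ht']
  · have := Real.sqrt_le_sqrt hs'
    rw [Real.sqrt_sq_eq_abs, habs] at this
    linarith

theorem stmt3_general (u₁ u₂ : ℝ) (hu₁ : 0 < u₁)
    (a : ℝ → ℝ) (ha : ∀ x, u₁ ≤ a x ∧ a x ≤ u₂)
    (ψ : ℝ → ℝ) (hψ : Differentiable ℝ ψ) (hψ' : Differentiable ℝ (deriv ψ))
    (hpos : ∀ x, 0 < ψ x)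
    (hode : ∀ x, deriv (deriv ψ) x = 2 * a x * ψ x)
    (hlim : Filter.Tendsto ψ Filter.atTop (nhds 0)) :
    ∀ x : ℝ, -Real.sqrt (2 * u₂) ≤ deriv ψ x / ψ x ∧
      deriv ψ x / ψ x ≤ -Real.sqrt (2 * u₁) := by
  have hnonneg x : 0 ≤ ψ x := (hpos x).le
  have hmono : Monotone (deriv ψ) := monotone_of_deriv_nonneg hψ' fun x => by
    rw [hode x]
    exact mul_nonneg (mul_nonneg zero_le_two (hu₁.trans_le (ha x).1).le) (hnonneg x)
  have hlim' := tendsto_deriv_atTop_of_monotone_deriv hψ hmono hlim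
  have hneg x : deriv ψ x ≤ 0 := hmono.ge_of_tendsto hlim' x
  intro x
  have hlower : 0 ≤ energy ψ u₁ x :=
    (antitone_energy_of_le hψ hψ' hode (fun y => (ha y).1) hnonneg hneg).le_of_tendsto
      (tendsto_energy_atTop u₁ hlim hlim') x
  have hupper : energy ψ u₂ x ≤ 0 :=
    (monotone_energy_of_ge hψ hψ' hode (fun y => (ha y).2) hnonneg hneg).ge_of_tendsto
      (tendsto_energy_atTop u₂ hlim hlim') x
  unfold energy at hlower hupper
  exact neg_sqrt_le_div_and_div_le_neg_sqrt (hpos x) (hneg x) (by linarith) (by linarith)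

/-- Lemma 2.3(2), case `λ > ρ`: if `ψ > 0` is twice differentiable, solves
`ψ'' = 2 a ψ` with `0 < u₁ ≤ a ≤ u₂`, and `ψ(x) → 0` as `x → +∞`, then
`−√(2u₂) ≤ ψ'(x)/ψ(x) ≤ −√(2u₁)` for all `x`. -/
theorem stmt3 (u₁ u₂ : ℝ) (hu₁ : 0 < u₁) (hu : u₁ ≤ u₂)
    (a : ℝ → ℝ) (ha_cont : Continuous a) (ha : ∀ x, u₁ ≤ a x ∧ a x ≤ u₂)
    (ψ : ℝ → ℝ) (hψ : Differentiable ℝ ψ) (hψ' : Differentiable ℝ (deriv ψ))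
    (hpos : ∀ x, 0 < ψ x)
    (hode : ∀ x, deriv (deriv ψ) x = 2 * a x * ψ x)
    (hlim : Filter.Tendsto ψ Filter.atTop (nhds 0)) :
    ∀ x : ℝ, -Real.sqrt (2 * u₂) ≤ deriv ψ x / ψ x ∧
      deriv ψ x / ψ x ≤ -Real.sqrt (2 * u₁) :=
  stmt3_general u₁ u₂ hu₁ a ha ψ hψ hψ' hpos hode hlim
end

section
/- For every x ∈ ℝ: √(2u₁) ≤ ψ'(x)/ψ(x) ≤ √(2u₂). In particular ψ is strictly increasing on ℝ. (This is Lemma 2.3(2) in the case λ < −ρ.) -/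
/-!
Since `ψ'' = 2aψ > 0`, `ψ'` is increasing; as `ψ` has a finite limit at `-∞`, this forces
`ψ' ≥ 0` and `ψ'(x) → 0` as `x → -∞`. For a constant `u`, the energy `E_u = ψ'² - uψ²` has
derivative `2ψ'(ψ'' - uψ) = 2ψψ'(2a - u)` and tends to `0` at `-∞`. Hence `E_{2u₁}` is increasing
and so nonnegative, while `E_{2u₂}` is decreasing and so nonpositive: `2u₁ψ² ≤ ψ'² ≤ 2u₂ψ²`.
-/

open Filter Set Topology

section MonotoneDeriv

variable {f : ℝ → ℝ} {c : ℝ}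

theorem deriv_nonneg_of_monotone_deriv_of_tendsto_atBot (hf : Differentiable ℝ f)
    (hmono : Monotone (deriv f)) (hlim : Tendsto f atBot (𝓝 c)) (x : ℝ) : 0 ≤ deriv f x := by
  by_contra! hneg
  have hchord : ∀ y ≤ x, f x - deriv f x * (x - y) ≤ f y := fun y hy => by
    have := (convex_Iic x).image_sub_le_mul_sub_of_deriv_le hf.continuous.continuousOn
      hf.differentiableOn (fun z hz => hmono (mem_Iic.1 (interior_subset hz)))
      y hy x (mem_Iic.2 le_rfl) hy
    linarith
  have hline : Tendsto (fun y => f x - deriv f x * (x - y)) atBot atTop := by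
    have := tendsto_atTop_add_const_left atBot (f x - deriv f x * x)
      (tendsto_id.const_mul_atBot_of_neg hneg)
    refine this.congr fun y => ?_
    simp only [id]
    ring
  exact not_tendsto_nhds_of_tendsto_atTop
    (tendsto_atTop_mono' atBot (eventually_atBot.2 ⟨x, hchord⟩) hline) c hlim

theorem tendsto_atBot_atBot_of_pos_le_deriv (hf : Differentiable ℝ f) {C : ℝ} (hC : 0 < C)
    (hderiv : ∀ x, C ≤ deriv f x) : Tendsto f atBot atBot := by
  have hchord : ∀ y ≤ 0, f y ≤ f 0 + C * y := fun y hy => by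
    have := mul_sub_le_image_sub_of_le_deriv hf hderiv hy
    linarith
  exact tendsto_atBot_mono' atBot (eventually_atBot.2 ⟨0, hchord⟩)
    (tendsto_atBot_add_const_left atBot (f 0) (tendsto_id.const_mul_atBot hC))

theorem tendsto_deriv_atBot_of_monotone_deriv (hf : Differentiable ℝ f)
    (hmono : Monotone (deriv f)) (hlim : Tendsto f atBot (𝓝 c)) :
    Tendsto (deriv f) atBot (𝓝 0) := by
  have hnonneg := deriv_nonneg_of_monotone_deriv_of_tendsto_atBot hf hmono hlim
  have hbdd : BddBelow (range (deriv f)) := ⟨0, by rintro _ ⟨x, rfl⟩; exact hnonneg x⟩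
  have hinf : ⨅ x, deriv f x = 0 := by
    refine le_antisymm ?_ (le_ciInf hnonneg)
    by_contra! hpos
    exact not_tendsto_nhds_of_tendsto_atBot
      (tendsto_atBot_atBot_of_pos_le_deriv hf hpos (ciInf_le hbdd)) c hlim
  simpa only [hinf] using tendsto_atBot_ciInf hmono hbdd

end MonotoneDeriv

section Energy

variable {ψ : ℝ → ℝ} (hψ : Differentiable ℝ ψ) (hψ' : Differentiable ℝ (deriv ψ))
  (hψ'_nonneg : ∀ x, 0 ≤ deriv ψ x)

include hψ hψ' in
theorem hasDerivAt_energy_s4 (u x : ℝ) :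
    HasDerivAt (fun y => deriv ψ y ^ 2 - u * ψ y ^ 2)
      (2 * deriv ψ x * (deriv (deriv ψ) x - u * ψ x)) x := by
  refine (((hψ' x).hasDerivAt.fun_pow 2).sub
    (((hψ x).hasDerivAt.fun_pow 2).const_mul u)).congr_deriv ?_
  simp only [Nat.cast_ofNat, Nat.add_one_sub_one, pow_one]
  ring

include hψ hψ' hψ'_nonneg in
theorem monotone_energy {u : ℝ} (hu : ∀ x, u * ψ x ≤ deriv (deriv ψ) x) :
    Monotone (fun y => deriv ψ y ^ 2 - u * ψ y ^ 2) :=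
  monotone_of_deriv_nonneg (fun x => (hasDerivAt_energy_s4 hψ hψ' u x).differentiableAt) fun x => by
    rw [(hasDerivAt_energy_s4 hψ hψ' u x).deriv]
    exact mul_nonneg (mul_nonneg zero_le_two (hψ'_nonneg x)) (sub_nonneg.2 (hu x))

include hψ hψ' hψ'_nonneg in
theorem antitone_energy {u : ℝ} (hu : ∀ x, deriv (deriv ψ) x ≤ u * ψ x) :
    Antitone (fun y => deriv ψ y ^ 2 - u * ψ y ^ 2) :=
  antitone_of_deriv_nonpos (fun x => (hasDerivAt_energy_s4 hψ hψ' u x).differentiableAt) fun x => by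
    rw [(hasDerivAt_energy_s4 hψ hψ' u x).deriv]
    exact mul_nonpos_of_nonneg_of_nonpos (mul_nonneg zero_le_two (hψ'_nonneg x))
      (sub_nonpos.2 (hu x))

end Energy

theorem Real.sqrt_le_div_of_mul_sq_le_sq {c p q : ℝ} (hp : 0 < p) (hq : 0 ≤ q)
    (h : c * p ^ 2 ≤ q ^ 2) : √c ≤ q / p := by
  rw [Real.sqrt_le_left (div_nonneg hq hp.le), div_pow, le_div_iff₀ (by positivity)]
  exact h

theorem Real.div_le_sqrt_of_sq_le_mul_sq {c p q : ℝ} (hp : 0 < p) (h : q ^ 2 ≤ c * p ^ 2) :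
    q / p ≤ √c := by
  refine (le_abs_self _).trans (Real.abs_le_sqrt ?_)
  rwa [div_pow, div_le_iff₀ (by positivity)]

theorem stmt4_general (u₁ u₂ : ℝ) (hu₁ : 0 < u₁)
    (a : ℝ → ℝ) (ha : ∀ x, u₁ ≤ a x ∧ a x ≤ u₂)
    (ψ : ℝ → ℝ) (hψ : Differentiable ℝ ψ) (hψ' : Differentiable ℝ (deriv ψ))
    (hpos : ∀ x, 0 < ψ x)
    (hode : ∀ x, deriv (deriv ψ) x = 2 * a x * ψ x)
    (hlim : Filter.Tendsto ψ Filter.atBot (nhds 0)) :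
    (∀ x : ℝ, Real.sqrt (2 * u₁) ≤ deriv ψ x / ψ x ∧
      deriv ψ x / ψ x ≤ Real.sqrt (2 * u₂)) ∧ StrictMono ψ := by
  have hψ'_mono : Monotone (deriv ψ) := monotone_of_deriv_nonneg hψ' fun x => by
    rw [hode]
    exact mul_nonneg (mul_nonneg zero_le_two (hu₁.le.trans (ha x).1)) (hpos x).le
  have hψ'_nonneg := deriv_nonneg_of_monotone_deriv_of_tendsto_atBot hψ hψ'_mono hlim
  have henergy_lim (u : ℝ) : Tendsto (fun y => deriv ψ y ^ 2 - u * ψ y ^ 2) atBot (𝓝 0) := by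
    simpa using ((tendsto_deriv_atBot_of_monotone_deriv hψ hψ'_mono hlim).pow 2).sub
      ((hlim.pow 2).const_mul u)
  have hlower (x : ℝ) : 2 * u₁ * ψ x ^ 2 ≤ deriv ψ x ^ 2 := by
    have hψ'' (y : ℝ) : 2 * u₁ * ψ y ≤ deriv (deriv ψ) y := by
      rw [hode]
      exact mul_le_mul_of_nonneg_right (by linarith [(ha y).1]) (hpos y).le
    exact sub_nonneg.1 ((monotone_energy hψ hψ' hψ'_nonneg hψ'').le_of_tendsto (henergy_lim _) x)
  have hupper (x : ℝ) : deriv ψ x ^ 2 ≤ 2 * u₂ * ψ x ^ 2 := by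
    have hψ'' (y : ℝ) : deriv (deriv ψ) y ≤ 2 * u₂ * ψ y := by
      rw [hode]
      exact mul_le_mul_of_nonneg_right (by linarith [(ha y).2]) (hpos y).le
    exact sub_nonpos.1 ((antitone_energy hψ hψ' hψ'_nonneg hψ'').ge_of_tendsto (henergy_lim _) x)
  have hratio (x : ℝ) : √(2 * u₁) ≤ deriv ψ x / ψ x ∧ deriv ψ x / ψ x ≤ √(2 * u₂) :=
    ⟨Real.sqrt_le_div_of_mul_sq_le_sq (hpos x) (hψ'_nonneg x) (hlower x),
      Real.div_le_sqrt_of_sq_le_mul_sq (hpos x) (hupper x)⟩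
  refine ⟨hratio, strictMono_of_deriv_pos fun x => ?_⟩
  have hquot : 0 < deriv ψ x / ψ x := (Real.sqrt_pos.2 (by positivity)).trans_le (hratio x).1
  exact (div_pos_iff_of_pos_right (hpos x)).1 hquot

/-- Lemma 2.3(2), case `λ < −ρ`: if `ψ > 0` is twice differentiable, solves
`ψ'' = 2 a ψ` with `0 < u₁ ≤ a ≤ u₂`, and `ψ(x) → 0` as `x → −∞`, then
`√(2u₁) ≤ ψ'(x)/ψ(x) ≤ √(2u₂)` for all `x`; in particular `ψ` is strictly
increasing on `ℝ`. -/
theorem stmt4 (u₁ u₂ : ℝ) (hu₁ : 0 < u₁) (hu : u₁ ≤ u₂)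
    (a : ℝ → ℝ) (ha_cont : Continuous a) (ha : ∀ x, u₁ ≤ a x ∧ a x ≤ u₂)
    (ψ : ℝ → ℝ) (hψ : Differentiable ℝ ψ) (hψ' : Differentiable ℝ (deriv ψ))
    (hpos : ∀ x, 0 < ψ x)
    (hode : ∀ x, deriv (deriv ψ) x = 2 * a x * ψ x)
    (hlim : Filter.Tendsto ψ Filter.atBot (nhds 0)) :
    (∀ x : ℝ, Real.sqrt (2 * u₁) ≤ deriv ψ x / ψ x ∧
      deriv ψ x / ψ x ≤ Real.sqrt (2 * u₂)) ∧ StrictMono ψ :=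
  stmt4_general u₁ u₂ hu₁ a ha ψ hψ hψ' hpos hode hlim
end

section
/- (i) For all reals y < z: K₂·(z − y) ≤ ln ψ(z) − ln ψ(y) ≤ K₁·(z − y). (ii) For every t ∈ ℝ there exists a unique V_t ∈ ℝ with ln ψ(V_t) = γ̄·t, and for all s < t: γ̄·(t − s)/K₁ ≤ V_t − V_s ≤ γ̄·(t − s)/K₂. (These are displays (2.18) and (2.19) of Remark 2.4.) -/
/-!
Since `a ≥ u₁ ≥ 0`, `ψ` is convex, and a positive convex function vanishing at `-∞` is
increasing with `ψ' → 0` at `-∞`. The energies `ψ'² - 2uψ²` have derivative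
`4 (a - u) ψ ψ'`, so they are monotone for `u = u₁` and antitone for `u = u₂`; as both tend to
`0` at `-∞`, this gives `2u₁ψ² ≤ ψ'² ≤ 2u₂ψ²`, i.e. `K₂ ≤ (log ψ)' ≤ K₁`. Part (i) is then the
mean value inequality, and part (ii) holds for any function whose derivative lies between two
positive constants: it is a bijection whose inverse has slopes between `1/K₁` and `1/K₂`.
-/

open Filter Set Topology Real

section Increments

variable {f : ℝ → ℝ} {m M : ℝ}

theorem surjective_of_le_deriv (hf : Differentiable ℝ f) (hm : 0 < m)
    (hf' : ∀ x, m ≤ deriv f x) : Function.Surjective f := by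
  have hgrowth := mul_sub_le_image_sub_of_le_deriv hf hf'
  refine hf.continuous.surjective ?_ ?_
  · refine tendsto_atTop_mono' _ ?_ (tendsto_atTop_add_const_left _ (f 0)
      (tendsto_id.const_mul_atTop hm))
    filter_upwards [eventually_ge_atTop 0] with x hx
    rw [id]
    linarith [hgrowth hx]
  · refine tendsto_atBot_mono' _ ?_ (tendsto_atBot_add_const_left _ (f 0)
      (tendsto_id.const_mul_atBot hm))
    filter_upwards [eventually_le_atBot 0] with x hx
    rw [id]
    linarith [hgrowth hx]

theorem bijective_of_le_deriv (hf : Differentiable ℝ f) (hm : 0 < m)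
    (hf' : ∀ x, m ≤ deriv f x) : Function.Bijective f :=
  ⟨(strictMono_of_deriv_pos fun x => hm.trans_le (hf' x)).injective,
    surjective_of_le_deriv hf hm hf'⟩

theorem div_le_sub_and_sub_le_div_of_le_deriv_le (hf : Differentiable ℝ f) (hm : 0 < m)
    (hfm : ∀ x, m ≤ deriv f x) (hfM : ∀ x, deriv f x ≤ M) {x y : ℝ} (hxy : f x < f y) :
    (f y - f x) / M ≤ y - x ∧ y - x ≤ (f y - f x) / m := by
  have hlt : x < y := (strictMono_of_deriv_pos fun z => hm.trans_le (hfm z)).lt_iff_lt.1 hxy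
  have hlow := mul_sub_le_image_sub_of_le_deriv hf hfm hlt.le
  have hup := image_sub_le_mul_sub_of_deriv_le hf hfM hlt.le
  have hM : 0 < M := pos_of_mul_pos_left (by linarith) (sub_pos.2 hlt).le
  exact ⟨(div_le_iff₀ hM).2 (by linarith), (le_div_iff₀ hm).2 (by linarith)⟩

end Increments

section GroundState

variable {a ψ : ℝ → ℝ}

theorem deriv_pos_of_monotone_deriv (hψ : Differentiable ℝ ψ) (hmono : Monotone (deriv ψ))
    (hpos : ∀ x, 0 < ψ x) (hlim : Tendsto ψ atBot (𝓝 0)) (x₀ : ℝ) : 0 < deriv ψ x₀ := by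
  obtain ⟨x, hψx, hx⟩ :=
    ((hlim.eventually_lt_const (hpos x₀)).and (eventually_lt_atBot x₀)).exists
  obtain ⟨c, hc, hslope⟩ :=
    exists_deriv_eq_slope ψ hx hψ.continuous.continuousOn hψ.differentiableOn
  calc 0 < (ψ x₀ - ψ x) / (x₀ - x) := div_pos (sub_pos.2 hψx) (sub_pos.2 hx)
    _ = deriv ψ c := hslope.symm
    _ ≤ deriv ψ x₀ := hmono hc.2.le

theorem tendsto_deriv_atBot_of_monotone_deriv_s5 {l : ℝ} (hψ : Differentiable ℝ ψ)
    (hmono : Monotone (deriv ψ)) (hd : ∀ x, 0 ≤ deriv ψ x) (hlim : Tendsto ψ atBot (𝓝 l)) :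
    Tendsto (deriv ψ) atBot (𝓝 0) := by
  have hbdd : BddBelow (range (deriv ψ)) := ⟨0, forall_mem_range.2 hd⟩
  have hL : Tendsto (deriv ψ) atBot (𝓝 (⨅ x, deriv ψ x)) := tendsto_atBot_ciInf hmono hbdd
  suffices (⨅ x, deriv ψ x) = 0 by rwa [this] at hL
  refine le_antisymm (not_lt.1 fun hL_pos => ?_) (le_ciInf hd)
  -- a positive lower bound on `ψ'` would drive `ψ` to `-∞`
  refine not_tendsto_nhds_of_tendsto_atBot ?_ l hlim
  refine tendsto_atBot_mono' _ ?_ (tendsto_atBot_add_const_left _ (ψ 0)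
    (tendsto_id.const_mul_atBot hL_pos))
  filter_upwards [eventually_le_atBot 0] with x hx
  rw [id]
  linarith [mul_sub_le_image_sub_of_le_deriv hψ (ciInf_le hbdd) hx]

theorem hasDerivAt_deriv_sq_sub (hψ : Differentiable ℝ ψ) (hψ' : Differentiable ℝ (deriv ψ))
    (hode : ∀ x, deriv (deriv ψ) x = 2 * a x * ψ x) (u x : ℝ) :
    HasDerivAt (fun y => deriv ψ y ^ 2 - 2 * u * ψ y ^ 2)
      (4 * (a x - u) * (ψ x * deriv ψ x)) x := by
  refine (((hψ' x).hasDerivAt.pow 2).sub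
    (((hψ x).hasDerivAt.pow 2).const_mul (2 * u))).congr_deriv ?_
  rw [hode]
  push_cast
  ring

theorem monotone_deriv_sq_sub {u : ℝ} (hψ : Differentiable ℝ ψ)
    (hψ' : Differentiable ℝ (deriv ψ)) (hode : ∀ x, deriv (deriv ψ) x = 2 * a x * ψ x)
    (hψψ' : ∀ x, 0 ≤ ψ x * deriv ψ x) (hu : ∀ x, u ≤ a x) :
    Monotone (fun y => deriv ψ y ^ 2 - 2 * u * ψ y ^ 2) := by
  have hE := hasDerivAt_deriv_sq_sub hψ hψ' hode u
  refine monotone_of_deriv_nonneg (fun x => (hE x).differentiableAt) fun x => ?_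
  rw [(hE x).deriv]
  have := sub_nonneg.2 (hu x)
  have := hψψ' x
  positivity

theorem antitone_deriv_sq_sub {u : ℝ} (hψ : Differentiable ℝ ψ)
    (hψ' : Differentiable ℝ (deriv ψ)) (hode : ∀ x, deriv (deriv ψ) x = 2 * a x * ψ x)
    (hψψ' : ∀ x, 0 ≤ ψ x * deriv ψ x) (hu : ∀ x, a x ≤ u) :
    Antitone (fun y => deriv ψ y ^ 2 - 2 * u * ψ y ^ 2) := by
  have hE := hasDerivAt_deriv_sq_sub hψ hψ' hode u
  refine antitone_of_deriv_nonpos (fun x => (hE x).differentiableAt) fun x => ?_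
  rw [(hE x).deriv]
  exact mul_nonpos_of_nonpos_of_nonneg (by linarith [hu x]) (hψψ' x)

theorem sqrt_mul_le_deriv_le_sqrt_mul {u₁ u₂ : ℝ} (hu₁ : 0 ≤ u₁)
    (ha : ∀ x, u₁ ≤ a x ∧ a x ≤ u₂) (hψ : Differentiable ℝ ψ)
    (hψ' : Differentiable ℝ (deriv ψ)) (hpos : ∀ x, 0 < ψ x)
    (hode : ∀ x, deriv (deriv ψ) x = 2 * a x * ψ x) (hlim : Tendsto ψ atBot (𝓝 0)) (x : ℝ) :
    √(2 * u₁) * ψ x ≤ deriv ψ x ∧ deriv ψ x ≤ √(2 * u₂) * ψ x := by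
  have hmono : Monotone (deriv ψ) := monotone_of_deriv_nonneg hψ' fun x => by
    rw [hode]
    have := hu₁.trans (ha x).1
    have := hpos x
    positivity
  have hd := deriv_pos_of_monotone_deriv hψ hmono hpos hlim
  have hdlim := tendsto_deriv_atBot_of_monotone_deriv_s5 hψ hmono (fun x => (hd x).le) hlim
  have henergy (u : ℝ) :
      Tendsto (fun y => deriv ψ y ^ 2 - 2 * u * ψ y ^ 2) atBot (𝓝 0) := by
    simpa using (hdlim.pow 2).sub ((hlim.pow 2).const_mul (2 * u))
  have hψψ' : ∀ x, 0 ≤ ψ x * deriv ψ x := fun x => (mul_pos (hpos x) (hd x)).le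
  have hlow := (monotone_deriv_sq_sub hψ hψ' hode hψψ' fun x => (ha x).1).le_of_tendsto
    (henergy u₁) x
  have hup := (antitone_deriv_sq_sub hψ hψ' hode hψψ' fun x => (ha x).2).ge_of_tendsto
    (henergy u₂) x
  have hu₂ : 0 ≤ 2 * u₂ := by linarith [hu₁.trans ((ha x).1.trans (ha x).2)]
  rw [← sqrt_sq (hpos x).le, ← sqrt_mul (by positivity), ← sqrt_mul hu₂, ← sqrt_sq (hd x).le]
  exact ⟨sqrt_le_sqrt (by linarith), sqrt_le_sqrt (by linarith)⟩

end GroundState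

theorem stmt5_general (u₁ u₂ : ℝ) (hu₁ : 0 < u₁)
    (a : ℝ → ℝ) (ha : ∀ x, u₁ ≤ a x ∧ a x ≤ u₂)
    (ψ : ℝ → ℝ) (hψ : Differentiable ℝ ψ) (hψ' : Differentiable ℝ (deriv ψ))
    (hpos : ∀ x, 0 < ψ x)
    (hode : ∀ x, deriv (deriv ψ) x = 2 * a x * ψ x)
    (hlim : Filter.Tendsto ψ Filter.atBot (nhds 0))
    (γb : ℝ) (hγb : 0 < γb) :
    (∀ y z : ℝ, y < z →
      Real.sqrt (2 * u₁) * (z - y) ≤ Real.log (ψ z) - Real.log (ψ y) ∧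
      Real.log (ψ z) - Real.log (ψ y) ≤ Real.sqrt (2 * u₂) * (z - y)) ∧
    (∀ t : ℝ, ∃! V : ℝ, Real.log (ψ V) = γb * t) ∧
    (∀ s t Vs Vt : ℝ, s < t → Real.log (ψ Vs) = γb * s → Real.log (ψ Vt) = γb * t →
      γb * (t - s) / Real.sqrt (2 * u₂) ≤ Vt - Vs ∧
      Vt - Vs ≤ γb * (t - s) / Real.sqrt (2 * u₁)) := by
  have hf : Differentiable ℝ (fun x => log (ψ x)) := hψ.log fun x => (hpos x).ne'
  have hf' (x : ℝ) : √(2 * u₁) ≤ deriv (fun x => log (ψ x)) x ∧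
      deriv (fun x => log (ψ x)) x ≤ √(2 * u₂) := by
    rw [((hψ x).hasDerivAt.log (hpos x).ne').deriv, le_div_iff₀ (hpos x), div_le_iff₀ (hpos x)]
    exact sqrt_mul_le_deriv_le_sqrt_mul hu₁.le ha hψ hψ' hpos hode hlim x
  have hK₂ : 0 < √(2 * u₁) := by positivity
  refine ⟨fun y z hyz => ⟨mul_sub_le_image_sub_of_le_deriv hf (fun x => (hf' x).1) hyz.le,
      image_sub_le_mul_sub_of_deriv_le hf (fun x => (hf' x).2) hyz.le⟩,
    fun t => (bijective_of_le_deriv hf hK₂ fun x => (hf' x).1).existsUnique _,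
    fun s t Vs Vt hst hs ht => ?_⟩
  have hlevel : log (ψ Vs) < log (ψ Vt) := by
    rw [hs, ht]
    exact mul_lt_mul_of_pos_left hst hγb
  have := div_le_sub_and_sub_le_div_of_le_deriv_le hf hK₂ (fun x => (hf' x).1)
    (fun x => (hf' x).2) hlevel
  rwa [hs, ht, ← mul_sub] at this

/-- Remark 2.4, displays (2.18) and (2.19): with `K₂ = √(2u₁)`, `K₁ = √(2u₂)` and
`γ̄ > 0`: (i) `K₂ (z−y) ≤ ln ψ(z) − ln ψ(y) ≤ K₁ (z−y)` for `y < z`; (ii) for each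
`t` there is a unique `V_t` with `ln ψ(V_t) = γ̄ t`, and for `s < t`,
`γ̄ (t−s)/K₁ ≤ V_t − V_s ≤ γ̄ (t−s)/K₂`. -/
theorem stmt5 (u₁ u₂ : ℝ) (hu₁ : 0 < u₁) (hu : u₁ ≤ u₂)
    (a : ℝ → ℝ) (ha_cont : Continuous a) (ha : ∀ x, u₁ ≤ a x ∧ a x ≤ u₂)
    (ψ : ℝ → ℝ) (hψ : Differentiable ℝ ψ) (hψ' : Differentiable ℝ (deriv ψ))
    (hpos : ∀ x, 0 < ψ x)
    (hode : ∀ x, deriv (deriv ψ) x = 2 * a x * ψ x)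
    (hlim : Filter.Tendsto ψ Filter.atBot (nhds 0))
    (γb : ℝ) (hγb : 0 < γb) :
    (∀ y z : ℝ, y < z →
      Real.sqrt (2 * u₁) * (z - y) ≤ Real.log (ψ z) - Real.log (ψ y) ∧
      Real.log (ψ z) - Real.log (ψ y) ≤ Real.sqrt (2 * u₂) * (z - y)) ∧
    (∀ t : ℝ, ∃! V : ℝ, Real.log (ψ V) = γb * t) ∧
    (∀ s t Vs Vt : ℝ, s < t → Real.log (ψ Vs) = γb * s → Real.log (ψ Vt) = γb * t →
      γb * (t - s) / Real.sqrt (2 * u₂) ≤ Vt - Vs ∧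
      Vt - Vs ≤ γb * (t - s) / Real.sqrt (2 * u₁)) :=
  stmt5_general u₁ u₂ hu₁ a ha ψ hψ hψ' hpos hode hlim γb hγb
end

section
/- There exist constants c₄ ∈ (0, 1/(2eK)] and c₅ > 0, depending only on v and K, such that for every real η with |η| ≤ c₄ the random variable e^{ηX} is integrable and E[e^{ηX}] ≥ e^{c₅η²}. (This is display (3.33) in the proof of Lemma 3.10, with v playing the role of the variance lower bound c₃.) -/
/-!
By the moment bound and `n ^ n ≤ e ^ n * n!`, the `n`-th term of the series for `E[e^{|ηX|}]`
is at most `(e K |η|) ^ n`, so that series converges once `|η| < 1 / (e K)`. Integrating the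
Taylor bound `e ^ x ≥ 1 + x + x² / 2 + x³ / 6`, valid on all of `ℝ`, gives
`E[e^{ηX}] ≥ 1 + v η² / 2 - (27 K³ / 6) |η|³ ≥ 1 + v η² / 4` once `|η| ≤ v / (18 K³)`, and
`1 + x ≥ e ^ {x / 2}` on `[0, 2]` turns this into `e ^ {v η² / 8}` once `η² ≤ 8 / v`.
-/

open MeasureTheory Real Set
open scoped Nat

namespace Real

lemma hasDerivAt_exp_sub_quadratic (x : ℝ) :
    HasDerivAt (fun x => exp x - (1 + x + x ^ 2 / 2)) (exp x - (1 + x)) x :=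
  ((hasDerivAt_exp x).fun_sub (((hasDerivAt_id' x).const_add 1).fun_add
    ((hasDerivAt_pow 2 x).div_const 2))).congr_deriv (by norm_num)

lemma hasDerivAt_exp_sub_cubic (x : ℝ) :
    HasDerivAt (fun x => exp x - (1 + x + x ^ 2 / 2 + x ^ 3 / 6))
      (exp x - (1 + x + x ^ 2 / 2)) x :=
  ((hasDerivAt_exp x).fun_sub ((((hasDerivAt_id' x).const_add 1).fun_add
    ((hasDerivAt_pow 2 x).div_const 2)).fun_add ((hasDerivAt_pow 3 x).div_const 6))).congr_deriv
    (by norm_num; ring)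

lemma monotone_exp_sub_quadratic : Monotone fun x => exp x - (1 + x + x ^ 2 / 2) :=
  monotone_of_deriv_nonneg (fun x => (hasDerivAt_exp_sub_quadratic x).differentiableAt)
    fun x => by rw [(hasDerivAt_exp_sub_quadratic x).deriv]; linarith [add_one_le_exp x]

/-- The derivative `exp x - (1 + x + x ^ 2 / 2)` of the difference has the sign of `x`. -/
lemma cubic_le_exp (x : ℝ) : 1 + x + x ^ 2 / 2 + x ^ 3 / 6 ≤ exp x := by
  set f : ℝ → ℝ := fun x => exp x - (1 + x + x ^ 2 / 2 + x ^ 3 / 6)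
  have hf : Differentiable ℝ f := fun x => (hasDerivAt_exp_sub_cubic x).differentiableAt
  have hf' (y : ℝ) : deriv f y = exp y - (1 + y + y ^ 2 / 2) := (hasDerivAt_exp_sub_cubic y).deriv
  have hderiv_le {y z : ℝ} (h : y ≤ z) : deriv f y ≤ deriv f z := by
    rw [hf', hf']; exact monotone_exp_sub_quadratic h
  have hf0 : f 0 = 0 := by simp [f]
  suffices 0 ≤ f x by simpa [f] using this
  rcases le_total 0 x with hx | hx
  · have := monotoneOn_of_deriv_nonneg (convex_Ici 0) hf.continuous.continuousOn
      hf.differentiableOn (fun y hy => by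
        rw [interior_Ici] at hy; simpa [hf'] using hderiv_le (le_of_lt hy))
      self_mem_Ici hx hx
    linarith
  · have := antitoneOn_of_deriv_nonpos (convex_Iic 0) hf.continuous.continuousOn
      hf.differentiableOn (fun y hy => by
        rw [interior_Iic] at hy; simpa [hf'] using hderiv_le (le_of_lt hy))
      hx self_mem_Iic hx
    linarith

lemma exp_half_le_one_add {x : ℝ} (hx₀ : 0 ≤ x) (hx₂ : x ≤ 2) : exp (x / 2) ≤ 1 + x := by
  rw [← exp_log (by linarith : 0 < 1 + x), exp_le_exp]
  refine le_trans ?_ (le_log_one_add_of_nonneg hx₀)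
  rw [le_div_iff₀ (by linarith)]
  nlinarith

lemma pow_self_div_factorial_le_exp_one_pow (n : ℕ) : (n : ℝ) ^ n / n ! ≤ exp 1 ^ n := by
  simpa [← exp_nat_mul] using pow_div_factorial_le_exp (x := (n : ℝ)) (by positivity) n

end Real

section

variable {Ω : Type*} [MeasurableSpace Ω] {μ : Measure Ω} {X : Ω → ℝ}

lemma integrable_exp_abs_of_summable_moments (hX : AEMeasurable X μ)
    (hint : ∀ n : ℕ, Integrable (fun ω => |X ω| ^ n) μ)
    (hsum : Summable fun n : ℕ => (∫ ω, |X ω| ^ n ∂μ) / n !) :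
    Integrable (fun ω => exp |X ω|) μ := by
  refine ⟨hX.abs.exp.aestronglyMeasurable, ?_⟩
  rw [hasFiniteIntegral_iff_ofReal (ae_of_all _ fun ω => (exp_pos _).le)]
  have hterm (n : ℕ) : ∫⁻ ω, ENNReal.ofReal (|X ω| ^ n / n !) ∂μ
      = ENNReal.ofReal ((∫ ω, |X ω| ^ n ∂μ) / n !) := by
    rw [← integral_div, ofReal_integral_eq_lintegral_ofReal ((hint n).div_const _)
      (ae_of_all _ fun ω => by positivity)]
  calc ∫⁻ ω, ENNReal.ofReal (exp |X ω|) ∂μ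
      = ∫⁻ ω, ∑' n : ℕ, ENNReal.ofReal (|X ω| ^ n / n !) ∂μ := by
        congr! 2 with ω
        rw [exp_eq_exp_ℝ, NormedSpace.exp_eq_tsum_div, ENNReal.ofReal_tsum_of_nonneg
          (fun n => by positivity) (summable_pow_div_factorial _)]
    _ = ∑' n : ℕ, ∫⁻ ω, ENNReal.ofReal (|X ω| ^ n / n !) ∂μ :=
        lintegral_tsum fun n => ((hX.abs.pow_const n).div_const _).ennreal_ofReal
    _ = ENNReal.ofReal (∑' n : ℕ, (∫ ω, |X ω| ^ n ∂μ) / n !) := by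
        simp_rw [hterm]
        exact (ENNReal.ofReal_tsum_of_nonneg
          (fun n => div_nonneg (integral_nonneg fun ω => by positivity) (by positivity)) hsum).symm
    _ < ⊤ := ENNReal.ofReal_lt_top

lemma integral_abs_mul_pow_div_factorial_le {K : ℝ} (hK : 0 ≤ K) (t : ℝ) {n : ℕ}
    (hmom : ∫ ω, |X ω| ^ n ∂μ ≤ (K * n) ^ n) :
    (∫ ω, |t * X ω| ^ n ∂μ) / n ! ≤ (|t| * (exp 1 * K)) ^ n := by
  have hscale : ∫ ω, |t * X ω| ^ n ∂μ = |t| ^ n * ∫ ω, |X ω| ^ n ∂μ := by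
    simp_rw [abs_mul, mul_pow, integral_const_mul]
  calc (∫ ω, |t * X ω| ^ n ∂μ) / n ! = |t| ^ n * (∫ ω, |X ω| ^ n ∂μ) / n ! := by rw [hscale]
    _ ≤ |t| ^ n * (K * n) ^ n / n ! := by gcongr
    _ = (|t| * K) ^ n * ((n : ℝ) ^ n / n !) := by ring
    _ ≤ (|t| * K) ^ n * exp 1 ^ n := by gcongr; exact pow_self_div_factorial_le_exp_one_pow n
    _ = (|t| * (exp 1 * K)) ^ n := by ring

lemma integrable_exp_mul_of_abs_moment_le {K t : ℝ} (hX : AEMeasurable X μ) (hK : 0 ≤ K)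
    (hint : ∀ n : ℕ, Integrable (fun ω => |X ω| ^ n) μ)
    (hmom : ∀ n : ℕ, ∫ ω, |X ω| ^ n ∂μ ≤ (K * n) ^ n) (ht : |t| * (exp 1 * K) < 1) :
    Integrable (fun ω => exp (t * X ω)) μ := by
  have hint_mul (n : ℕ) : Integrable (fun ω => |t * X ω| ^ n) μ := by
    simpa only [abs_mul, mul_pow] using (hint n).const_mul (|t| ^ n)
  have hsum : Summable fun n : ℕ => (∫ ω, |t * X ω| ^ n ∂μ) / n ! :=
    (summable_geometric_of_lt_one (by positivity) ht).of_nonneg_of_le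
      (fun n => div_nonneg (integral_nonneg fun ω => by positivity) (by positivity))
      (fun n => integral_abs_mul_pow_div_factorial_le hK t (hmom n))
  refine (integrable_exp_abs_of_summable_moments (hX.const_mul t) hint_mul hsum).mono
    (hX.const_mul t).exp.aestronglyMeasurable (ae_of_all _ fun ω => ?_)
  simp only [norm_eq_abs, abs_exp, exp_le_exp]
  exact le_abs_self _

lemma one_add_sq_mul_sub_le_integral_exp_mul [IsProbabilityMeasure μ] (t : ℝ)
    (h₁ : Integrable X μ) (h₂ : Integrable (fun ω => X ω ^ 2) μ)
    (h₃ : Integrable (fun ω => |X ω| ^ 3) μ) (hexp : Integrable (fun ω => exp (t * X ω)) μ)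
    (hmean : ∫ ω, X ω ∂μ = 0) :
    1 + t ^ 2 / 2 * ∫ ω, X ω ^ 2 ∂μ - |t| ^ 3 / 6 * ∫ ω, |X ω| ^ 3 ∂μ
      ≤ ∫ ω, exp (t * X ω) ∂μ := by
  have hpoint (ω : Ω) :
      1 + t * X ω + t ^ 2 / 2 * X ω ^ 2 - |t| ^ 3 / 6 * |X ω| ^ 3 ≤ exp (t * X ω) := by
    have hcube : -(|t| ^ 3 * |X ω| ^ 3) ≤ (t * X ω) ^ 3 := by
      rw [← mul_pow, ← abs_mul, ← abs_pow]; exact neg_abs_le _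
    linarith [cubic_le_exp (t * X ω)]
  have hlin : Integrable (fun ω => 1 + t * X ω) μ := (integrable_const 1).add (h₁.const_mul t)
  have hquad : Integrable (fun ω => 1 + t * X ω + t ^ 2 / 2 * X ω ^ 2) μ :=
    hlin.add (h₂.const_mul _)
  calc 1 + t ^ 2 / 2 * ∫ ω, X ω ^ 2 ∂μ - |t| ^ 3 / 6 * ∫ ω, |X ω| ^ 3 ∂μ
      = ∫ ω, (1 + t * X ω + t ^ 2 / 2 * X ω ^ 2 - |t| ^ 3 / 6 * |X ω| ^ 3) ∂μ := by
        rw [integral_sub hquad (h₃.const_mul _), integral_add hlin (h₂.const_mul _),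
          integral_add (integrable_const 1) (h₁.const_mul t), integral_const_mul,
          integral_const_mul, integral_const_mul, hmean]
        simp
    _ ≤ ∫ ω, exp (t * X ω) ∂μ := integral_mono (hquad.sub (h₃.const_mul _)) hexp hpoint

lemma exp_mul_sq_le_integral_exp_mul [IsProbabilityMeasure μ] {v C t : ℝ} (hv : 0 < v)
    (h₁ : Integrable X μ) (h₂ : Integrable (fun ω => X ω ^ 2) μ)
    (h₃ : Integrable (fun ω => |X ω| ^ 3) μ) (hexp : Integrable (fun ω => exp (t * X ω)) μ)
    (hmean : ∫ ω, X ω ∂μ = 0) (hvar : v ≤ ∫ ω, X ω ^ 2 ∂μ) (hC : ∫ ω, |X ω| ^ 3 ∂μ ≤ C)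
    (htC : |t| * C ≤ 3 / 2 * v) (ht : t ^ 2 ≤ 8 / v) :
    exp (v / 8 * t ^ 2) ≤ ∫ ω, exp (t * X ω) ∂μ := by
  have hlower := one_add_sq_mul_sub_le_integral_exp_mul t h₁ h₂ h₃ hexp hmean
  have hsecond : v / 2 * t ^ 2 ≤ t ^ 2 / 2 * ∫ ω, X ω ^ 2 ∂μ := by
    have := mul_le_mul_of_nonneg_left hvar (by positivity : (0 : ℝ) ≤ t ^ 2 / 2)
    linarith
  have hthird : |t| ^ 3 / 6 * ∫ ω, |X ω| ^ 3 ∂μ ≤ v / 4 * t ^ 2 :=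
    calc |t| ^ 3 / 6 * ∫ ω, |X ω| ^ 3 ∂μ ≤ |t| ^ 3 / 6 * C := by gcongr
      _ = t ^ 2 * (|t| * C) / 6 := by rw [pow_succ, sq_abs]; ring
      _ ≤ t ^ 2 * (3 / 2 * v) / 6 := by gcongr
      _ = v / 4 * t ^ 2 := by ring
  calc exp (v / 8 * t ^ 2) = exp (v / 4 * t ^ 2 / 2) := by ring_nf
    _ ≤ 1 + v / 4 * t ^ 2 := by
        refine exp_half_le_one_add (by positivity) ?_
        calc v / 4 * t ^ 2 ≤ v / 4 * (8 / v) := by gcongr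
          _ = 2 := by field_simp; norm_num
    _ ≤ ∫ ω, exp (t * X ω) ∂μ := by linarith

end

open MeasureTheory in
/-- Display (3.33): there are constants `c₄ ∈ (0, 1/(2eK)]` and `c₅ > 0`, depending only
on `v` and `K`, such that any centered random variable `X` with `E[X²] ≥ v` and
`E[|X|^ℓ] ≤ (Kℓ)^ℓ` for all `ℓ ≥ 1` satisfies `E[e^{ηX}] ≥ e^{c₅η²}` for `|η| ≤ c₄`. -/
theorem stmt7 (v K : ℝ) (hv : 0 < v) (hK : 0 < K) :
    ∃ c₄ c₅ : ℝ, 0 < c₄ ∧ c₄ ≤ 1 / (2 * Real.exp 1 * K) ∧ 0 < c₅ ∧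
      ∀ (Ω : Type) (mΩ : MeasurableSpace Ω) (P : Measure Ω),
        IsProbabilityMeasure P →
        ∀ X : Ω → ℝ, Measurable X →
          (∀ ℓ : ℕ, 1 ≤ ℓ → Integrable (fun ω => |X ω| ^ ℓ) P) →
          (∫ ω, X ω ∂P) = 0 →
          v ≤ ∫ ω, (X ω) ^ 2 ∂P →
          (∀ ℓ : ℕ, 1 ≤ ℓ → ∫ ω, |X ω| ^ ℓ ∂P ≤ (K * ℓ) ^ ℓ) →
          ∀ η : ℝ, |η| ≤ c₄ →
            Integrable (fun ω => Real.exp (η * X ω)) P ∧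
            Real.exp (c₅ * η ^ 2) ≤ ∫ ω, Real.exp (η * X ω) ∂P := by
  refine ⟨min (1 / (2 * exp 1 * K)) (min (v / (18 * K ^ 3)) √(8 / v)), v / 8, by positivity,
    min_le_left _ _, by positivity, ?_⟩
  intro Ω _ P hP X hXm hint hmean hvar hmom η hη
  have hη₁ : |η| ≤ 1 / (2 * exp 1 * K) := hη.trans (min_le_left _ _)
  have hη₂ : |η| ≤ v / (18 * K ^ 3) := hη.trans ((min_le_right _ _).trans (min_le_left _ _))
  have hη₃ : η ^ 2 ≤ 8 / v := by
    rw [← sq_abs, ← Real.le_sqrt (abs_nonneg _) (by positivity)]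
    exact hη.trans ((min_le_right _ _).trans (min_le_right _ _))
  have hint' (n : ℕ) : Integrable (fun ω => |X ω| ^ n) P :=
    n.eq_zero_or_pos.elim (fun h => by simp [h]) (hint n)
  have hmom' (n : ℕ) : ∫ ω, |X ω| ^ n ∂P ≤ (K * n) ^ n :=
    n.eq_zero_or_pos.elim (fun h => by simp [h]) (hmom n)
  have hexp : Integrable (fun ω => exp (η * X ω)) P := by
    refine integrable_exp_mul_of_abs_moment_le hXm.aemeasurable hK.le hint' hmom' ?_
    calc |η| * (exp 1 * K) ≤ 1 / (2 * exp 1 * K) * (exp 1 * K) := by gcongr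
      _ < 1 := by field_simp; norm_num
  refine ⟨hexp, ?_⟩
  have hX₁ : Integrable X P :=
    (integrable_norm_iff hXm.aestronglyMeasurable).mp (by simpa using hint 1 le_rfl)
  have hX₂ : Integrable (fun ω => X ω ^ 2) P := by simpa [sq_abs] using hint 2 (by norm_num)
  refine exp_mul_sq_le_integral_exp_mul hv hX₁ hX₂ (hint 3 (by norm_num)) hexp hmean hvar
    (by exact_mod_cast hmom 3 (by norm_num)) ?_ hη₃
  calc |η| * (K * 3) ^ 3 ≤ v / (18 * K ^ 3) * (K * 3) ^ 3 := by gcongr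
    _ = 3 / 2 * v := by field_simp; ring
end

section
/- For every κ > 0 and every integer k with 1 ≤ k ≤ N and k ≥ (κ/(2c))², one has P( min_{1 ≤ m ≤ k} S_m ≥ −κ·√k ) ≥ 1 − e^{−κ²/(4c²)}. (This is the Doob-inequality core of Lemma 3.9, with N(κ₀) = (κ₀/(2c₂))² and C₆(κ₀) = 1 − exp{−κ₀²/(4c₂²)}.) -/
/-!
For `η > 0` the process `exp (-η S_m)` is a nonnegative submartingale for the filtration of the
first `m` variables: each new factor `exp (-η X_m)` is independent of the past and has mean
`≥ 1` by Jensen, since `E X_m = 0`. Doob's maximal inequality therefore bounds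
`P (min_{m ≤ k} S_m < -κ√k)` by `e^{-ηκ√k} E[e^{-η S_k}] ≤ exp (k c² η² - η κ √k)`.
The minimizing rate `η = κ / (2 c² √k)` is admissible (`η ≤ 1/c`) exactly when `k ≥ (κ/(2c))²`,
and gives the exponent `-κ² / (4 c²)`.
-/

open MeasureTheory ProbabilityTheory Finset Real

variable {Ω : Type*} {mΩ : MeasurableSpace Ω} {P : Measure Ω} {N : ℕ}

namespace MeasureTheory

lemma Submartingale.measure_exists_ge_le [IsFiniteMeasure P] {f : ℕ → Ω → ℝ}
    {𝒢 : Filtration ℕ mΩ} (hsub : Submartingale f 𝒢 P) (hnonneg : 0 ≤ f) {ε : ℝ} (hε : 0 < ε)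
    (n : ℕ) : P {ω | ∃ m ≤ n, ε ≤ f m ω} ≤ ENNReal.ofReal ((∫ ω, f n ω ∂P) / ε) := by
  set D := {ω | (⟨ε, hε.le⟩ : NNReal) ≤ (range (n + 1)).sup' nonempty_range_add_one fun m => f m ω}
  have hD : {ω | ∃ m ≤ n, ε ≤ f m ω} = D := by
    ext ω
    simp [D, le_sup'_iff]
  have hmax := maximal_ineq hsub hnonneg (ε := ⟨ε, hε.le⟩) n
  have hint : ∫ ω in D, f n ω ∂P ≤ ∫ ω, f n ω ∂P :=
    setIntegral_le_integral (hsub.integrable n) (ae_of_all _ (hnonneg n))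
  rw [hD, ENNReal.ofReal_div_of_pos hε, ENNReal.le_div_iff_mul_le (by simp [hε]) (by simp),
    mul_comm, ENNReal.ofReal_eq_coe_nnreal hε.le]
  exact hmax.trans (ENNReal.ofReal_le_ofReal hint)

end MeasureTheory

namespace ProbabilityTheory

lemma one_le_mgf_of_integral_eq_zero [IsProbabilityMeasure P] {X : Ω → ℝ} {t : ℝ}
    (hX : Integrable X P) (hexp : Integrable (fun ω => exp (t * X ω)) P)
    (hmean : ∫ ω, X ω ∂P = 0) : 1 ≤ mgf X P t :=
  calc (1 : ℝ) = ∫ ω, (1 + t * X ω) ∂P := by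
        rw [integral_add (integrable_const 1) (hX.const_mul t), integral_const_mul, hmean]
        simp
    _ ≤ mgf X P t := integral_mono ((integrable_const 1).add (hX.const_mul t)) hexp
        fun ω => by linarith [add_one_le_exp (t * X ω)]

def prefixFiltration {β : Type*} [mβ : MeasurableSpace β] (X : Fin N → Ω → β)
    (hX : ∀ i, Measurable (X i)) : Filtration ℕ mΩ where
  seq n := ⨆ i ∈ {i : Fin N | (i : ℕ) < n}, mβ.comap (X i)
  mono' _ _ hmn := biSup_mono fun _ hi => lt_of_lt_of_le hi hmn
  le' _ := iSup₂_le fun i _ => (hX i).comap_le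

section prefixFiltration

variable {β : Type*} [mβ : MeasurableSpace β] {X : Fin N → Ω → β}

lemma measurable_prefixFiltration (hX : ∀ i, Measurable (X i)) {i : Fin N} {n : ℕ}
    (hin : (i : ℕ) < n) : Measurable[prefixFiltration X hX n] (X i) :=
  (comap_measurable (X i)).mono
    (le_iSup₂ (f := fun j (_ : j ∈ {j : Fin N | (j : ℕ) < n}) => mβ.comap (X j)) i hin) le_rfl

lemma iIndepFun.indep_comap_prefixFiltration (hX : ∀ i, Measurable (X i)) (hind : iIndepFun X P)
    (i : Fin N) :
    Indep (mβ.comap (X i)) (prefixFiltration X hX i) P := by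
  have := indep_iSup_of_disjoint (fun j => (hX j).comap_le) hind
    (S := {i}) (T := {j : Fin N | (j : ℕ) < i})
    (Set.disjoint_singleton_left.2 (lt_irrefl (i : ℕ)))
  rwa [_root_.iSup_singleton] at this

end prefixFiltration

/-- `partialSum X m = X 0 + ⋯ + X (m - 1)`, the paper's `S_m`; it stays `S_N` for `m ≥ N`. -/
def partialSum (X : Fin N → Ω → ℝ) (n : ℕ) (ω : Ω) : ℝ :=
  ∑ i ∈ univ.filter (fun i : Fin N => (i : ℕ) < n), X i ω

section partialSum

variable {X : Fin N → Ω → ℝ}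

lemma partialSum_eq_sum (n : ℕ) :
    partialSum X n = ∑ i ∈ univ.filter (fun i : Fin N => (i : ℕ) < n), X i := by
  ext ω
  simp [partialSum]

lemma partialSum_succ_of_lt {n : ℕ} (hn : n < N) (ω : Ω) :
    partialSum X (n + 1) ω = partialSum X n ω + X ⟨n, hn⟩ ω := by
  have hfilter : univ.filter (fun i : Fin N => (i : ℕ) < n + 1) =
      insert ⟨n, hn⟩ (univ.filter fun i : Fin N => (i : ℕ) < n) := by
    ext i
    simp only [Order.lt_add_one_iff, mem_filter, mem_univ, true_and, mem_insert, Fin.ext_iff]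
    omega
  rw [partialSum, hfilter, sum_insert (by simp), add_comm, partialSum]

lemma partialSum_succ_of_le {n : ℕ} (hn : N ≤ n) : partialSum X (n + 1) = partialSum X n := by
  have hlt : ∀ m ≥ n, ∀ i : Fin N, (i : ℕ) < m := fun m hm i => i.is_lt.trans_le (hn.trans hm)
  ext ω
  simp only [partialSum, filter_true_of_mem fun i _ => hlt _ n.le_succ i,
    filter_true_of_mem fun i _ => hlt _ le_rfl i]

lemma stronglyMeasurable_partialSum (hX : ∀ i, Measurable (X i)) (n : ℕ) :
    StronglyMeasurable[prefixFiltration X hX n] (partialSum X n) :=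
  (Finset.measurable_sum _ fun _ hi =>
    measurable_prefixFiltration hX (mem_filter.1 hi).2).stronglyMeasurable

lemma iIndepFun.integrable_exp_mul_partialSum (hX : ∀ i, Measurable (X i))
    (hind : iIndepFun X P) {t : ℝ} (hexp : ∀ i, Integrable (fun ω => exp (t * X i ω)) P)
    (n : ℕ) : Integrable (fun ω => exp (t * partialSum X n ω)) P := by
  have : IsProbabilityMeasure P := hind.isProbabilityMeasure
  simpa [partialSum_eq_sum] using hind.integrable_exp_mul_sum hX fun i _ => hexp i

lemma iIndepFun.mgf_partialSum_le (hX : ∀ i, Measurable (X i)) (hind : iIndepFun X P)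
    {t B : ℝ} (hB : ∀ i, mgf (X i) P t ≤ B) {n : ℕ} (hn : n ≤ N) :
    mgf (partialSum X n) P t ≤ B ^ n := by
  rw [partialSum_eq_sum, hind.mgf_sum hX]
  calc ∏ i ∈ univ.filter (fun i : Fin N => (i : ℕ) < n), mgf (X i) P t
      ≤ ∏ i ∈ univ.filter (fun i : Fin N => (i : ℕ) < n), B :=
        prod_le_prod (fun _ _ => mgf_nonneg) fun i _ => hB i
    _ = B ^ n := by rw [prod_const, Fin.card_filter_val_lt, min_eq_right hn]

lemma iIndepFun.submartingale_exp_mul_partialSum (hX : ∀ i, Measurable (X i))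
    (hind : iIndepFun X P) {t : ℝ} (hexp : ∀ i, Integrable (fun ω => exp (t * X i ω)) P)
    (hmgf : ∀ i, 1 ≤ mgf (X i) P t) :
    Submartingale (fun n ω => exp (t * partialSum X n ω)) (prefixFiltration X hX) P := by
  have : IsProbabilityMeasure P := hind.isProbabilityMeasure
  have hadapted : StronglyAdapted (prefixFiltration X hX) fun n ω => exp (t * partialSum X n ω) :=
    fun n => ((stronglyMeasurable_partialSum hX n).measurable.const_mul t).exp.stronglyMeasurable
  have hint := hind.integrable_exp_mul_partialSum hX hexp
  refine submartingale_nat hadapted hint fun n => ?_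
  rcases lt_or_ge n N with hn | hn
  · set i : Fin N := ⟨n, hn⟩
    have hstep : (fun ω => exp (t * partialSum X (n + 1) ω)) =
        (fun ω => exp (t * partialSum X n ω)) * fun ω => exp (t * X i ω) := by
      ext ω
      simp [partialSum_succ_of_lt hn, mul_add, exp_add, i]
    have hcond : P[fun ω => exp (t * X i ω) | prefixFiltration X hX n] =ᵐ[P]
        fun _ => mgf (X i) P t :=
      condExp_indep_eq (hX i).comap_le (Filtration.le _ n)
        ((comap_measurable (X i)).const_mul t).exp.stronglyMeasurable
        (hind.indep_comap_prefixFiltration hX i)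
    rw [hstep]
    filter_upwards [condExp_mul_of_stronglyMeasurable_left (hadapted n) (hstep ▸ hint (n + 1))
      (hexp i), hcond] with ω hmul hconst
    rw [hmul, Pi.mul_apply, hconst]
    exact le_mul_of_one_le_right (exp_pos _).le (hmgf i)
  · rw [partialSum_succ_of_le hn, condExp_of_stronglyMeasurable (Filtration.le _ n) (hadapted n)
      (hint n)]

lemma iIndepFun.measure_exists_partialSum_lt_le (hX : ∀ i, Measurable (X i))
    (hind : iIndepFun X P) (hint : ∀ i, Integrable (X i) P) (hmean : ∀ i, ∫ ω, X i ω ∂P = 0)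
    {η B : ℝ} (hη : 0 < η) (hexp : ∀ i, Integrable (fun ω => exp (-η * X i ω)) P)
    (hB : ∀ i, mgf (X i) P (-η) ≤ B) (b : ℝ) {k : ℕ} (hk : k ≤ N) :
    P {ω | ∃ m ≤ k, partialSum X m ω < -b} ≤ ENNReal.ofReal (B ^ k / exp (η * b)) := by
  have : IsProbabilityMeasure P := hind.isProbabilityMeasure
  have hsub := hind.submartingale_exp_mul_partialSum hX hexp fun i =>
    one_le_mgf_of_integral_eq_zero (hint i) (hexp i) (hmean i)
  calc P {ω | ∃ m ≤ k, partialSum X m ω < -b}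
      ≤ P {ω | ∃ m ≤ k, exp (η * b) ≤ exp (-η * partialSum X m ω)} :=
        measure_mono fun ω ⟨m, hm, hlt⟩ => ⟨m, hm, exp_le_exp.2 (by nlinarith)⟩
    _ ≤ ENNReal.ofReal (mgf (partialSum X k) P (-η) / exp (η * b)) :=
        hsub.measure_exists_ge_le (fun _ _ => (exp_pos _).le) (exp_pos _) k
    _ ≤ ENNReal.ofReal (B ^ k / exp (η * b)) :=
        ENNReal.ofReal_le_ofReal (div_le_div_of_nonneg_right (hind.mgf_partialSum_le hX hB hk)
          (exp_pos _).le)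

end partialSum

lemma chernoff_exponent_at_optimal_rate {c κ : ℝ} (hc : 0 < c) {k : ℕ} (hk : 0 < k) :
    exp (c ^ 2 * (κ / (2 * c ^ 2 * √k)) ^ 2) ^ k / exp (κ / (2 * c ^ 2 * √k) * (κ * √k)) =
      exp (-κ ^ 2 / (4 * c ^ 2)) := by
  have hk' : (0 : ℝ) < k := by exact_mod_cast hk
  have hsq : √(k : ℝ) ^ 2 = k := sq_sqrt hk'.le
  rw [← exp_nat_mul, ← exp_sub]
  congr 1
  field_simp
  rw [hsq]
  ring

lemma div_two_mul_sq_mul_sqrt_le_one_div {c κ : ℝ} (hc : 0 < c) (hκ : 0 < κ) {k : ℝ}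
    (hk : (κ / (2 * c)) ^ 2 ≤ k) : κ / (2 * c ^ 2 * √k) ≤ 1 / c := by
  have hsqrt : κ / (2 * c) ≤ √k := le_sqrt_of_sq_le hk
  have hk' : 0 < √k := (div_pos hκ (by positivity)).trans_le hsqrt
  rw [div_le_div_iff₀ (by positivity) hc]
  rw [div_le_iff₀ (by positivity)] at hsqrt
  nlinarith

end ProbabilityTheory

open MeasureTheory ProbabilityTheory in
/-- Core of Lemma 3.9: if `X₁,…,X_N` are independent, centered, with
`E[e^{ηX_i}] ≤ e^{c²η²}` for `|η| ≤ 1/c`, then for `κ > 0` and `1 ≤ k ≤ N` with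
`k ≥ (κ/(2c))²`, `P(min_{1≤m≤k} S_m ≥ −κ√k) ≥ 1 − e^{−κ²/(4c²)}`. -/
theorem stmt8 (Ω : Type) (mΩ : MeasurableSpace Ω) (P : Measure Ω)
    [IsProbabilityMeasure P]
    (c : ℝ) (hc : 0 < c) (N : ℕ)
    (X : Fin N → Ω → ℝ) (hmeas : ∀ i, Measurable (X i))
    (hindep : iIndepFun X P)
    (hint : ∀ i, Integrable (X i) P)
    (hmean : ∀ i, (∫ ω, X i ω ∂P) = 0)
    (hmgf : ∀ i, ∀ η : ℝ, |η| ≤ 1 / c →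
      Integrable (fun ω => Real.exp (η * X i ω)) P ∧
      ∫ ω, Real.exp (η * X i ω) ∂P ≤ Real.exp (c ^ 2 * η ^ 2)) :
    ∀ κ : ℝ, 0 < κ → ∀ k : ℕ, 1 ≤ k → k ≤ N → (κ / (2 * c)) ^ 2 ≤ (k : ℝ) →
      ENNReal.ofReal (1 - Real.exp (-κ ^ 2 / (4 * c ^ 2))) ≤
        P {ω | ∀ m : ℕ, 1 ≤ m → m ≤ k →
          -κ * Real.sqrt k ≤
            ∑ i ∈ Finset.univ.filter (fun i : Fin N => (i : ℕ) < m), X i ω} := by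
  intro κ hκ k hk1 hkN hkκ
  set η := κ / (2 * c ^ 2 * √k)
  have hη : |-η| ≤ 1 / c := by
    rw [abs_neg, abs_of_pos (by positivity)]
    exact div_two_mul_sq_mul_sqrt_le_one_div hc hκ hkκ
  have hbad := hindep.measure_exists_partialSum_lt_le hmeas hint hmean (by positivity)
    (fun i => (hmgf i _ hη).1) (fun i => by simpa [mgf] using (hmgf i _ hη).2) (κ * √k) hkN
  rw [chernoff_exponent_at_optimal_rate hc hk1] at hbad
  calc ENNReal.ofReal (1 - Real.exp (-κ ^ 2 / (4 * c ^ 2)))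
      = P Set.univ - ENNReal.ofReal (Real.exp (-κ ^ 2 / (4 * c ^ 2))) := by
        rw [ENNReal.ofReal_sub _ (Real.exp_pos _).le, ENNReal.ofReal_one, measure_univ]
    _ ≤ P (Set.univ \ {ω | ∃ m ≤ k, partialSum X m ω < -(κ * √k)}) :=
        (tsub_le_tsub_left hbad _).trans le_measure_sdiff
    _ ≤ _ := by
        refine measure_mono fun ω hω m _ hm => ?_
        simp only [Set.mem_sdiff, Set.mem_ofPred_eq, not_exists, not_and, not_lt] at hω
        rw [neg_mul]
        exact hω.2 m hm
end

section
/- If for every K > 0 one has limsup_{n→∞} P( S_n > K·√n ) > 0, then limsup_{n→∞} S_n/√n = +∞ P-almost surely. (This is the ergodicity argument in the proof of Lemma 2.6 showing that limsup_{x→∞} R_x/√x = +∞ a.s. when σ_λ² > 0.) -/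
open Filter MeasureTheory Topology

/-! Let `g = limsup S_n / √n`, with values in `EReal`. Since `S_n ∘ T - S_n = U ∘ T^n - U` is
bounded, `g ∘ T = g`, so by ergodicity `g` is a.e. equal to a constant `c`. By the reverse Fatou
lemma, `P (K ≤ g) ≥ limsup_n P (S_n > K √n) > 0`, hence `K ≤ c` for every `K > 0` and `c = ⊤`. -/

theorem MeasureTheory.limsup_measure_le_measure_limsup {Ω : Type*} [MeasurableSpace Ω]
    {μ : Measure Ω} [IsFiniteMeasure μ] {s : ℕ → Set Ω} (hs : ∀ n, NullMeasurableSet (s n) μ) :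
    limsup (fun n => μ (s n)) atTop ≤ μ (limsup s atTop) := by
  set t : ℕ → Set Ω := fun N => ⋃ i ≥ N, s i
  have ht_anti : Antitone t := fun _ _ hMN =>
    Set.biUnion_mono (fun _ hi => hMN.trans hi) fun _ _ => le_rfl
  calc limsup (fun n => μ (s n)) atTop
      ≤ limsup (μ ∘ t) atTop :=
        limsup_le_limsup (.of_forall fun n =>
          measure_mono (Set.subset_iUnion₂ (s := fun i (_ : i ≥ n) => s i) n le_rfl))
    _ = μ (⋂ N, t N) :=
        (tendsto_measure_iInter_atTop (fun N => .biUnion (Set.to_countable _) fun i _ => hs i)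
          ht_anti ⟨0, measure_ne_top μ _⟩).limsup_eq
    _ = μ (limsup s atTop) := by rw [limsup_eq_iInf_iSup_of_nat]; rfl

theorem EReal.limsup_coe_le_of_tendsto_sub {ι : Type*} {l : Filter ι} {a b : ι → ℝ}
    (h : Tendsto (fun i => a i - b i) l (𝓝 0)) :
    limsup (fun i => (a i : EReal)) l ≤ limsup (fun i => (b i : EReal)) l := by
  rcases l.eq_or_neBot with rfl | _
  · simp
  have hlim : limsup (fun i => ((a i - b i : ℝ) : EReal)) l = 0 :=
    (continuous_coe_real_ereal.tendsto 0 |>.comp h).limsup_eq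
  calc limsup (fun i => (a i : EReal)) l
      = limsup ((fun i => (b i : EReal)) + fun i => ((a i - b i : ℝ) : EReal)) l := by
        congr 1; funext i; rw [Pi.add_apply, ← EReal.coe_add, add_sub_cancel]
    _ ≤ limsup (fun i => (b i : EReal)) l + limsup (fun i => ((a i - b i : ℝ) : EReal)) l :=
        EReal.limsup_add_le (.inr (hlim ▸ EReal.zero_ne_top)) (.inr (hlim ▸ EReal.zero_ne_bot))
    _ = limsup (fun i => (b i : EReal)) l := by rw [hlim, add_zero]

theorem EReal.limsup_coe_eq_of_tendsto_sub {ι : Type*} {l : Filter ι} {a b : ι → ℝ}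
    (h : Tendsto (fun i => a i - b i) l (𝓝 0)) :
    limsup (fun i => (a i : EReal)) l = limsup (fun i => (b i : EReal)) l :=
  (limsup_coe_le_of_tendsto_sub h).antisymm
    (limsup_coe_le_of_tendsto_sub (by simpa using h.neg))

theorem limsup_birkhoffSum_apply_div_eq {α : Type*} (f : α → α) {g : α → ℝ} {C : ℝ}
    (hg : ∀ x, |g x| ≤ C) {r : ℕ → ℝ} (hr : Tendsto r atTop atTop) (x : α) :
    limsup (fun n => ((birkhoffSum f g n (f x) / r n : ℝ) : EReal)) atTop
      = limsup (fun n => ((birkhoffSum f g n x / r n : ℝ) : EReal)) atTop := by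
  refine EReal.limsup_coe_eq_of_tendsto_sub ?_
  have hbdd : ∀ n, |birkhoffSum f g n (f x) - birkhoffSum f g n x| ≤ 2 * C := fun n => by
    rw [birkhoffSum_apply_sub_birkhoffSum]
    linarith [abs_sub (g (f^[n] x)) (g x), hg (f^[n] x), hg x]
  simp only [← sub_div]
  exact tendsto_bdd_div_atTop_nhds_zero (.of_forall fun n => neg_le_of_abs_le (hbdd n))
    (.of_forall fun n => le_of_abs_le (hbdd n)) hr

theorem Measurable.birkhoffSum {α M : Type*} [MeasurableSpace α] [MeasurableSpace M]
    [AddCommMonoid M] [MeasurableAdd₂ M] {f : α → α} {g : α → M} (hf : Measurable f)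
    (hg : Measurable g) (n : ℕ) : Measurable (birkhoffSum f g n) :=
  Finset.measurable_sum _ fun k _ => hg.comp (hf.iterate k)

theorem MeasureTheory.limsup_measure_lt_le_measure_le_limsup {Ω : Type*} [MeasurableSpace Ω]
    {μ : Measure Ω} [IsFiniteMeasure μ] {f : ℕ → Ω → ℝ} (hf : ∀ n, Measurable (f n)) (K : ℝ) :
    limsup (fun n => μ {ω | K < f n ω}) atTop
      ≤ μ {ω | (K : EReal) ≤ limsup (fun n => (f n ω : EReal)) atTop} :=
  (limsup_measure_le_measure_limsup fun n =>
    (measurableSet_lt measurable_const (hf n)).nullMeasurableSet).trans <|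
  measure_mono fun _ hω => le_limsup_of_frequently_le' <|
    (mem_limsup_iff_frequently_mem.1 hω).mono fun _ hn => EReal.coe_le_coe_iff.2 (le_of_lt hn)

open MeasureTheory in
/-- Ergodicity argument in the proof of Lemma 2.6: for `S_n = Σ_{k<n} U ∘ T^k` with `T`
ergodic and `U` bounded measurable, if for every `K > 0`
`limsup_n P(S_n > K √n) > 0`, then almost surely `limsup_n S_n/√n = +∞`. -/
theorem stmt11 (Ω : Type) (mΩ : MeasurableSpace Ω) (P : Measure Ω)
    [IsProbabilityMeasure P]
    (T : Ω → Ω) (hT : Ergodic T P)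
    (U : Ω → ℝ) (hU : Measurable U) (C : ℝ) (hbd : ∀ ω, |U ω| ≤ C)
    (h : ∀ K : ℝ, 0 < K →
      0 < Filter.limsup
        (fun nn : ℕ => P {ω | K * Real.sqrt nn < ∑ k ∈ Finset.range nn, U (T^[k] ω)})
        Filter.atTop) :
    P {ω | Filter.limsup
        (fun nn : ℕ => (((∑ k ∈ Finset.range nn, U (T^[k] ω)) / Real.sqrt nn : ℝ) : EReal))
        Filter.atTop = ⊤} = 1 := by
  set g : Ω → EReal := fun ω =>
    limsup (fun n : ℕ => ((birkhoffSum T U n ω / √n : ℝ) : EReal)) atTop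
  have hS : ∀ n, Measurable fun ω => birkhoffSum T U n ω / √n := fun n =>
    (hT.measurable.birkhoffSum hU n).div_const _
  have hg : Measurable g := Measurable.limsup fun n => measurable_coe_real_ereal.comp (hS n)
  have hg_inv : g ∘ T = g := funext <| limsup_birkhoffSum_apply_div_eq T hbd
    (Real.tendsto_sqrt_atTop.comp tendsto_natCast_atTop_atTop)
  obtain ⟨c, hc⟩ := hT.ae_eq_const_of_ae_eq_comp₀ hg.nullMeasurable (.of_eq hg_inv)
  have hc_ge : ∀ K : ℝ, 0 < K → (K : EReal) ≤ c := by
    intro K hK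
    have hpos : 0 < P {ω | (K : EReal) ≤ g ω} := by
      refine (h K hK).trans_le (le_of_eq_of_le (limsup_congr ?_)
        (limsup_measure_lt_le_measure_le_limsup hS K))
      filter_upwards [eventually_gt_atTop 0] with n hn
      simp_rw [lt_div_iff₀ (Real.sqrt_pos.2 (Nat.cast_pos.2 hn))]
      rfl
    obtain ⟨ω, hKω, hgω⟩ := ((frequently_ae_iff.2 hpos.ne').and_eventually hc).exists
    exact hKω.trans_eq hgω
  obtain rfl : c = ⊤ := (EReal.eq_top_iff_forall_lt c).2 fun y =>
    (EReal.coe_lt_coe_iff.2 ((le_abs_self y).trans_lt (lt_add_one |y|))).trans_le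
      (hc_ge _ (by positivity))
  exact ((ae_iff_measure_eq (hg (measurableSet_singleton ⊤)).nullMeasurableSet).1 hc).trans
    measure_univ
end

section
/- Assume that for every y ∈ ℝ, P({ω : F(ω, x) ≤ y·√x}) → Φ(y/s) as x → +∞. Then for every y ∈ ℝ, P({ω : V_t(ω) ≤ v·t + y·√t}) → Φ(λ·y/(s·√v)) as t → +∞; that is, (V_t − v·t)/√t converges in distribution to a centered Gaussian with variance s²·v/λ². (This is the change-of-variables argument proving the central limit theorem for the front V_t in Lemma 3.7, with F = −ln φ(·, −λ*), λ = λ*, v = v*, s = σ'_{−λ*}.) -/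
/-!
Since `x ↦ λx + F(ω, x)` is increasing and takes the value `λvt` at `V_t`, the event
`V_t ≤ x_t := vt + y√t` is the event `F(ω, x_t) ≥ -λy√t`. As `x_t → ∞` and
`-λy√t / √x_t → -λy/√v`, the assumed limit law of `F(·, x)/√x` (whose limit `Φ(·/s)` is
continuous) gives `P(F(·, x_t) < -λy√t) → Φ(-λy/(s√v))`, and the symmetry of `Φ` finishes.
-/

open MeasureTheory ProbabilityTheory Filter Set Topology

namespace MeasureTheory.Measure

variable {μ : Measure ℝ} [IsProbabilityMeasure μ] [NullSingletonClass μ]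

theorem continuous_measureReal_Iic : Continuous fun x => μ.real (Iic x) := by
  simp only [← cdf_eq_real]
  refine continuous_iff_continuousAt.mpr fun x => ?_
  rw [(monotone_cdf μ).continuousAt_iff_leftLim_eq_rightLim, StieltjesFunction.rightLim_eq]
  have hatom : (cdf μ).measure {x} = 0 := by rw [measure_cdf, measure_singleton]
  rw [StieltjesFunction.measure_singleton, ENNReal.ofReal_eq_zero] at hatom
  linarith [(monotone_cdf μ).leftLim_le (le_refl x)]

theorem measureReal_Iic_neg (hμ : μ.map (fun x => -x) = μ) (a : ℝ) :
    μ.real (Iic (-a)) = 1 - μ.real (Iic a) := by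
  calc μ.real (Iic (-a)) = μ.real (Neg.neg ⁻¹' Iic (-a)) := by
        rw [← map_measureReal_apply measurable_neg measurableSet_Iic, hμ]
    _ = μ.real (Ioi a) := by
        rw [measureReal_congr Ioi_ae_eq_Ici]
        congr 1
        ext x
        simp
    _ = 1 - μ.real (Iic a) := by
        rw [← compl_Iic, probReal_compl_eq_one_sub measurableSet_Iic]

end MeasureTheory.Measure

theorem tendsto_measureReal_lt_of_tendsto_measureReal_le {Ω ι : Type*} [MeasurableSpace Ω]
    {μ : Measure Ω} [IsFiniteMeasure μ] {l : Filter ι} {X : ι → Ω → ℝ} {r c : ι → ℝ}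
    {G : ℝ → ℝ} {z : ℝ} (hG : ContinuousAt G z)
    (hX : ∀ y, Tendsto (fun i => μ.real {ω | X i ω ≤ y * r i}) l (𝓝 (G y)))
    (hr : ∀ᶠ i in l, 0 < r i) (hc : Tendsto (fun i => c i / r i) l (𝓝 z)) :
    Tendsto (fun i => μ.real {ω | X i ω < c i}) l (𝓝 (G z)) := by
  refine tendsto_order.2 ⟨fun a ha => ?_, fun b hb => ?_⟩
  · obtain ⟨y, hyz, hay⟩ := (hG.eventually (lt_mem_nhds ha)).exists_lt
    filter_upwards [(hX y).eventually (lt_mem_nhds hay), hc.eventually (lt_mem_nhds hyz), hr]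
      with i hi hci hri
    refine hi.trans_le (measureReal_mono fun ω hω => ?_)
    exact (Set.mem_ofPred.1 hω).trans_lt ((lt_div_iff₀ hri).1 hci)
  · obtain ⟨y, hzy, hby⟩ := (hG.eventually (gt_mem_nhds hb)).exists_gt
    filter_upwards [(hX y).eventually (gt_mem_nhds hby), hc.eventually (gt_mem_nhds hzy), hr]
      with i hi hci hri
    refine (measureReal_mono fun ω hω => ?_).trans_lt hi
    exact (Set.mem_ofPred.1 hω).trans ((div_lt_iff₀ hri).1 hci) |>.le

theorem tendsto_add_mul_sqrt_div_self (v y : ℝ) :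
    Tendsto (fun t => (v * t + y * √t) / t) atTop (𝓝 v) := by
  have h : Tendsto (fun t => v + y * (√t)⁻¹) atTop (𝓝 v) := by
    simpa using tendsto_const_nhds.add
      ((tendsto_inv_atTop_zero.comp Real.tendsto_sqrt_atTop).const_mul y)
  refine h.congr' ?_
  filter_upwards [eventually_gt_atTop 0] with t ht
  field_simp
  linear_combination (-y) * Real.sq_sqrt ht.le

open MeasureTheory ProbabilityTheory in
theorem stmt13_general (Ω : Type) (mΩ : MeasurableSpace Ω) (P : Measure Ω)
    [IsProbabilityMeasure P]
    (lam v s : ℝ) (hv : 0 < v)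
    (F : Ω → ℝ → ℝ) (hFmeas : ∀ x : ℝ, Measurable fun ω => F ω x)
    (hmono : ∀ ω, StrictMono fun x => lam * x + F ω x)
    (V : ℝ → Ω → ℝ) (hV : ∀ t ω, lam * V t ω + F ω (V t ω) = lam * v * t)
    (hcdf : ∀ y : ℝ, Filter.Tendsto
      (fun x : ℝ => (P {ω | F ω x ≤ y * Real.sqrt x}).toReal)
      Filter.atTop (nhds ((gaussianReal 0 1 (Set.Iic (y / s))).toReal))) :
    ∀ y : ℝ, Filter.Tendsto
      (fun t : ℝ => (P {ω | V t ω ≤ v * t + y * Real.sqrt t}).toReal)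
      Filter.atTop
      (nhds ((gaussianReal 0 1 (Set.Iic (lam * y / (s * Real.sqrt v)))).toReal)) := by
  intro y
  set x : ℝ → ℝ := fun t => v * t + y * √t
  have hratio : Tendsto (fun t => x t / t) atTop (𝓝 v) := tendsto_add_mul_sqrt_div_self v y
  have hx : Tendsto x atTop atTop := by
    refine (tendsto_id.atTop_mul_pos hv hratio).congr' ?_
    filter_upwards [eventually_ne_atTop 0] with t ht
    exact mul_div_cancel₀ _ ht
  -- `V t ≤ x t` iff `λ x t + F (x t) ≥ λ v t`, i.e. iff `F (x t) ≥ -λ y √t`.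
  have hprob : ∀ t, P.real {ω | V t ω ≤ x t}
      = 1 - P.real {ω | F ω (x t) < -(lam * y * √t)} := by
    intro t
    rw [← probReal_compl_eq_one_sub (measurableSet_lt (hFmeas _) measurable_const)]
    congr 1
    ext ω
    rw [mem_compl_iff, mem_ofPred_eq, mem_ofPred_eq, not_lt, ← (hmono ω).le_iff_le, hV]
    constructor <;> intro h <;> linarith
  have hscale : Tendsto (fun t => -(lam * y * √t) / √(x t)) atTop (𝓝 (-(lam * y) / √v)) := by
    refine (tendsto_const_nhds.div ((Real.continuous_sqrt.tendsto v).comp hratio)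
      (Real.sqrt_pos.2 hv).ne').congr' ?_
    filter_upwards [eventually_gt_atTop 0] with t ht
    show -(lam * y) / √(x t / t) = _
    rw [Real.sqrt_div' _ ht.le]
    field_simp [(Real.sqrt_pos.2 ht).ne']
  have := nullSingletonClass_gaussianReal (μ := 0) one_ne_zero
  have hlt := tendsto_measureReal_lt_of_tendsto_measureReal_le
    ((Measure.continuous_measureReal_Iic.comp (continuous_id.div_const s)).continuousAt)
    (fun y => (hcdf y).comp hx) (hx.eventually (eventually_gt_atTop 0) |>.mono
      fun t ht => Real.sqrt_pos.2 ht) hscale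
  have hΦ : (gaussianReal 0 1).real (Iic (lam * y / (s * √v)))
      = 1 - (gaussianReal 0 1).real (Iic (-(lam * y) / √v / s)) := by
    rw [neg_div, neg_div, div_div, mul_comm (√v),
      Measure.measureReal_Iic_neg (by simpa using gaussianReal_map_neg (μ := 0) (v := 1)),
      sub_sub_cancel]
  rw [← measureReal_def, hΦ]
  exact (tendsto_const_nhds.sub hlt).congr fun t => (hprob t).symm

open MeasureTheory ProbabilityTheory in
/-- The change-of-variables CLT argument of Lemma 3.7: if `x ↦ λx + F(ω,x)` is a
continuous strictly increasing bijection of `ℝ`, `V_t` solves `λV_t + F(ω,V_t) = λvt`,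
and `P(F(·,x) ≤ y√x) → Φ(y/s)` as `x → ∞` for each `y`, then
`P(V_t ≤ vt + y√t) → Φ(λy/(s√v))` as `t → ∞` for each `y`. -/
theorem stmt13 (Ω : Type) (mΩ : MeasurableSpace Ω) (P : Measure Ω)
    [IsProbabilityMeasure P]
    (lam v s : ℝ) (hlam : 0 < lam) (hv : 0 < v) (hs : 0 < s)
    (F : Ω → ℝ → ℝ) (hFmeas : ∀ x : ℝ, Measurable fun ω => F ω x)
    (hmono : ∀ ω, StrictMono fun x => lam * x + F ω x)
    (hcont : ∀ ω, Continuous fun x => lam * x + F ω x)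
    (hsurj : ∀ ω, Function.Surjective fun x => lam * x + F ω x)
    (V : ℝ → Ω → ℝ) (hV : ∀ t ω, lam * V t ω + F ω (V t ω) = lam * v * t)
    (hcdf : ∀ y : ℝ, Filter.Tendsto
      (fun x : ℝ => (P {ω | F ω x ≤ y * Real.sqrt x}).toReal)
      Filter.atTop (nhds ((gaussianReal 0 1 (Set.Iic (y / s))).toReal))) :
    ∀ y : ℝ, Filter.Tendsto
      (fun t : ℝ => (P {ω | V t ω ≤ v * t + y * Real.sqrt t}).toReal)
      Filter.atTop
      (nhds ((gaussianReal 0 1 (Set.Iic (lam * y / (s * Real.sqrt v)))).toReal)) :=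
  stmt13_general Ω mΩ P lam v s hv F hFmeas hmono V hV hcdf
end
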